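/- For all smooth f1, f2 : ℝ² → ℂ the following operator identity holds componentwise: D_A^{(0)}(D_A^{*(1)}(f1,f2)) + D_A^{*(2)}(D_A^{(1)}(f1,f2)) = (L_{p,q} f1 - M_{p,q} f2, L_{p,q} f2 + M_{p,q} f1), where L_{p,q} = -(X² + Y²) and M_{p,q} = (i/2)(q x^{q-1} + p y^{p-1}). Equivalently, the twisted Laplacian 𝕃_{p,q} = D_A D_A* + D_A* D_A on 1-forms satisfies 𝕃_{p,q}(f1 dx + f2 dy) = (L_{p,q} f1 - M_{p,q} f2) dx + (L_{p,q} f2 + M_{p,q} f1) dy. -/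

import Mathlib

open MeasureTheory Complex Real

noncomputable section

abbrev Pt := ℝ × ℝ
abbrev Fn := Pt → ℂ

/-- ∂/∂x -/
def pdx (u : Fn) : Fn := fun z => fderiv ℝ u z (1, 0)
/-- ∂/∂y -/
def pdy (u : Fn) : Fn := fun z => fderiv ℝ u z (0, 1)

/-- X = ∂_x - (i/2) y^p -/
def Xop (p : ℕ) (u : Fn) : Fn :=
  fun z => pdx u z - Complex.I / 2 * (z.2 : ℂ) ^ p * u z
/-- Y = ∂_y + (i/2) x^q -/
def Yop (q : ℕ) (u : Fn) : Fn :=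
  fun z => pdy u z + Complex.I / 2 * (z.1 : ℂ) ^ q * u z

/-- L_{p,q} = -(X² + Y²) -/
def Lpq (p q : ℕ) (u : Fn) : Fn :=
  fun z => -(Xop p (Xop p u) z + Yop q (Yop q u) z)

/-- M_{p,q} = (i/2)(q x^{q-1} + p y^{p-1}) -/
def Mpq (p q : ℕ) (u : Fn) : Fn :=
  fun z => Complex.I / 2 * ((q : ℂ) * (z.1 : ℂ) ^ (q - 1) + (p : ℂ) * (z.2 : ℂ) ^ (p - 1)) * u z

/-- D_A^{(0)} u = (X u, Y u), components of the twisted differential on functions -/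
def DA0 (p q : ℕ) (u : Fn) : Fn × Fn := (Xop p u, Yop q u)

/-- D_A^{(1)}(f1,f2) = X f2 - Y f1, the dx∧dy-coefficient of the twisted differential on 1-forms -/
def DA1 (p q : ℕ) (f : Fn × Fn) : Fn := fun z => Xop p f.2 z - Yop q f.1 z

/-- D_A^{*(1)}(f1,f2) = -X f1 - Y f2 -/
def DAs1 (p q : ℕ) (f : Fn × Fn) : Fn := fun z => -Xop p f.1 z - Yop q f.2 z

/-- D_A^{*(2)} g = (Y g, -X g) -/
def DAs2 (p q : ℕ) (g : Fn) : Fn × Fn := (Yop q g, fun z => -Xop p g z)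

lemma contDiff_pdx {u : Fn} (hu : ContDiff ℝ (⊤ : ℕ∞) u) : ContDiff ℝ (⊤ : ℕ∞) (pdx u) :=
  (hu.fderiv_right (m := (⊤ : ℕ∞)) le_rfl).clm_apply contDiff_const

lemma contDiff_pdy {u : Fn} (hu : ContDiff ℝ (⊤ : ℕ∞) u) : ContDiff ℝ (⊤ : ℕ∞) (pdy u) :=
  (hu.fderiv_right (m := (⊤ : ℕ∞)) le_rfl).clm_apply contDiff_const

lemma pdx_pdy {u : Fn} (hu : ContDiff ℝ (⊤ : ℕ∞) u) (z : Pt) : pdx (pdy u) z = pdy (pdx u) z := by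
  have hsym : IsSymmSndFDerivAt ℝ u z :=
    (hu.contDiffAt).isSymmSndFDerivAt (by rw [minSmoothness_of_isRCLikeNormedField]; exact WithTop.coe_le_coe.mpr (le_top : (2 : ℕ∞) ≤ ⊤))
  have hd : DifferentiableAt ℝ (fderiv ℝ u) z :=
    ((hu.fderiv_right (m := (⊤ : ℕ∞)) le_rfl).differentiable (by simp)).differentiableAt
  have h1 : pdx (pdy u) z = fderiv ℝ (fderiv ℝ u) z (1,0) (0,1) := by
    show fderiv ℝ (fun w => fderiv ℝ u w (0,1)) z (1,0) = _
    rw [fderiv_clm_apply hd (differentiableAt_const _)]; simp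
  have h2 : pdy (pdx u) z = fderiv ℝ (fderiv ℝ u) z (0,1) (1,0) := by
    show fderiv ℝ (fun w => fderiv ℝ u w (1,0)) z (0,1) = _
    rw [fderiv_clm_apply hd (differentiableAt_const _)]; simp
  rw [h1, h2, hsym]

-- algebra of pdx / pdy
variable {u v : Fn} {z : Pt}

lemma pdx_add (hu : DifferentiableAt ℝ u z) (hv : DifferentiableAt ℝ v z) :
    pdx (fun w => u w + v w) z = pdx u z + pdx v z := by
  simp [pdx, fderiv_fun_add hu hv]

lemma pdx_sub (hu : DifferentiableAt ℝ u z) (hv : DifferentiableAt ℝ v z) :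
    pdx (fun w => u w - v w) z = pdx u z - pdx v z := by
  simp [pdx, fderiv_fun_sub hu hv]

lemma pdy_sub (hu : DifferentiableAt ℝ u z) (hv : DifferentiableAt ℝ v z) :
    pdy (fun w => u w - v w) z = pdy u z - pdy v z := by
  simp [pdy, fderiv_fun_sub hu hv]

lemma pdx_neg : pdx (fun w => -u w) z = -pdx u z := by
  simp [pdx, fderiv_neg]

lemma pdy_neg : pdy (fun w => -u w) z = -pdy u z := by
  simp [pdy, fderiv_neg]

lemma pdx_mul (hu : DifferentiableAt ℝ u z) (hv : DifferentiableAt ℝ v z) :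
    pdx (fun w => u w * v w) z = pdx u z * v z + u z * pdx v z := by
  simp [pdx, fderiv_fun_mul hu hv]; ring

lemma pdy_mul (hu : DifferentiableAt ℝ u z) (hv : DifferentiableAt ℝ v z) :
    pdy (fun w => u w * v w) z = pdy u z * v z + u z * pdy v z := by
  simp [pdy, fderiv_fun_mul hu hv]; ring

-- coordinate powers
def Lx : Pt →L[ℝ] ℂ := Complex.ofRealCLM.comp (ContinuousLinearMap.fst ℝ ℝ ℝ)
def Ly : Pt →L[ℝ] ℂ := Complex.ofRealCLM.comp (ContinuousLinearMap.snd ℝ ℝ ℝ)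

lemma hasF_cx (z : Pt) : HasFDerivAt (fun w : Pt => (w.1 : ℂ)) Lx z := Lx.hasFDerivAt

lemma hasF_cy (z : Pt) : HasFDerivAt (fun w : Pt => (w.2 : ℂ)) Ly z := Ly.hasFDerivAt

lemma hasF_cxpow (n : ℕ) (z : Pt) :
    HasFDerivAt (fun w : Pt => (w.1 : ℂ) ^ n) (((n : ℂ) * (z.1 : ℂ) ^ (n - 1)) • Lx) z := by
  induction n with
  | zero =>
    simp only [pow_zero]
    convert hasFDerivAt_const (𝕜 := ℝ) (1 : ℂ) z using 1
    simp
    exact zero_smul ℂ Lx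
  | succ n ih =>
    have h := ih.mul (hasF_cx z)
    have heq : ((z.1:ℂ)^n) • Lx + (z.1:ℂ) • (((n : ℂ) * (z.1 : ℂ) ^ (n - 1)) • Lx)
        = (((n+1 : ℕ) : ℂ) * (z.1 : ℂ) ^ ((n+1) - 1)) • Lx := by
      refine ContinuousLinearMap.ext fun w => ?_
      simp only [ContinuousLinearMap.add_apply, ContinuousLinearMap.smul_apply, smul_eq_mul]
      rcases n with _ | m
      · simp
      · simp only [Nat.add_sub_cancel, Nat.succ_sub_one]
        push_cast
        rw [pow_succ]
        try ring
    rw [← heq]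
    simp only [pow_succ]
    exact h

lemma hasF_cypow (n : ℕ) (z : Pt) :
    HasFDerivAt (fun w : Pt => (w.2 : ℂ) ^ n) (((n : ℂ) * (z.2 : ℂ) ^ (n - 1)) • Ly) z := by
  induction n with
  | zero =>
    simp only [pow_zero]
    convert hasFDerivAt_const (𝕜 := ℝ) (1 : ℂ) z using 1
    simp
    exact zero_smul ℂ Ly
  | succ n ih =>
    have h := ih.mul (hasF_cy z)
    have heq : ((z.2:ℂ)^n) • Ly + (z.2:ℂ) • (((n : ℂ) * (z.2 : ℂ) ^ (n - 1)) • Ly)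
        = (((n+1 : ℕ) : ℂ) * (z.2 : ℂ) ^ ((n+1) - 1)) • Ly := by
      refine ContinuousLinearMap.ext fun w => ?_
      simp only [ContinuousLinearMap.add_apply, ContinuousLinearMap.smul_apply, smul_eq_mul]
      rcases n with _ | m
      · simp
      · simp only [Nat.add_sub_cancel, Nat.succ_sub_one]
        push_cast
        rw [pow_succ]
        try ring
    rw [← heq]
    simp only [pow_succ]
    exact h

lemma pdx_cxpow (n : ℕ) (z : Pt) :
    pdx (fun w : Pt => (w.1 : ℂ) ^ n) z = (n : ℂ) * (z.1 : ℂ) ^ (n - 1) := by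
  simp [pdx, (hasF_cxpow n z).fderiv, Lx]

lemma pdy_cypow (n : ℕ) (z : Pt) :
    pdy (fun w : Pt => (w.2 : ℂ) ^ n) z = (n : ℂ) * (z.2 : ℂ) ^ (n - 1) := by
  simp [pdy, (hasF_cypow n z).fderiv, Ly]

lemma pdx_const (c : ℂ) {z : Pt} : pdx (fun _ => c) z = 0 := by simp [pdx]
lemma pdy_const (c : ℂ) {z : Pt} : pdy (fun _ => c) z = 0 := by simp [pdy]

lemma contDiff_cxq (n : ℕ) : ContDiff ℝ (⊤ : ℕ∞) (fun z : Pt => (z.1 : ℂ) ^ n) :=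
  (Complex.ofRealCLM.contDiff.comp contDiff_fst).pow n
lemma contDiff_cyp (n : ℕ) : ContDiff ℝ (⊤ : ℕ∞) (fun z : Pt => (z.2 : ℂ) ^ n) :=
  (Complex.ofRealCLM.contDiff.comp contDiff_snd).pow n

lemma contDiff_Xop (p : ℕ) {u : Fn} (hu : ContDiff ℝ (⊤ : ℕ∞) u) : ContDiff ℝ (⊤ : ℕ∞) (Xop p u) :=
  (contDiff_pdx hu).sub ((contDiff_const.mul (contDiff_cyp p)).mul hu)
lemma contDiff_Yop (q : ℕ) {u : Fn} (hu : ContDiff ℝ (⊤ : ℕ∞) u) : ContDiff ℝ (⊤ : ℕ∞) (Yop q u) :=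
  (contDiff_pdy hu).add ((contDiff_const.mul (contDiff_cxq q)).mul hu)

lemma pdx_Yop (q : ℕ) {u : Fn} (hu : ContDiff ℝ (⊤ : ℕ∞) u) (z : Pt) :
    pdx (Yop q u) z = pdx (pdy u) z
      + Complex.I / 2 * ((q : ℂ) * (z.1 : ℂ) ^ (q - 1) * u z + (z.1 : ℂ) ^ q * pdx u z) := by
  have du : DifferentiableAt ℝ u z := hu.differentiable (by simp) z
  have dpdy : DifferentiableAt ℝ (pdy u) z := (contDiff_pdy hu).differentiable (by simp) z
  have hcx : DifferentiableAt ℝ (fun w : Pt => Complex.I / 2 * (w.1 : ℂ) ^ q) z :=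
    (contDiff_const.mul (contDiff_cxq q)).differentiable (by simp) z
  have hq : DifferentiableAt ℝ (fun w : Pt => (w.1 : ℂ) ^ q) z :=
    (contDiff_cxq q).differentiable (by simp) z
  show pdx (fun w => pdy u w + Complex.I / 2 * (w.1 : ℂ) ^ q * u w) z = _
  rw [pdx_add (v := fun w => Complex.I / 2 * (w.1 : ℂ) ^ q * u w) dpdy (hcx.mul du), pdx_mul hcx du,
    pdx_mul (differentiableAt_const _) hq, pdx_const, pdx_cxpow]
  ring

lemma pdy_Xop (p : ℕ) {u : Fn} (hu : ContDiff ℝ (⊤ : ℕ∞) u) (z : Pt) :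
    pdy (Xop p u) z = pdy (pdx u) z
      - Complex.I / 2 * ((p : ℂ) * (z.2 : ℂ) ^ (p - 1) * u z + (z.2 : ℂ) ^ p * pdy u z) := by
  have du : DifferentiableAt ℝ u z := hu.differentiable (by simp) z
  have dpdx : DifferentiableAt ℝ (pdx u) z := (contDiff_pdx hu).differentiable (by simp) z
  have hcy : DifferentiableAt ℝ (fun w : Pt => Complex.I / 2 * (w.2 : ℂ) ^ p) z :=
    (contDiff_const.mul (contDiff_cyp p)).differentiable (by simp) z
  have hp : DifferentiableAt ℝ (fun w : Pt => (w.2 : ℂ) ^ p) z :=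
    (contDiff_cyp p).differentiable (by simp) z
  show pdy (fun w => pdx u w - Complex.I / 2 * (w.2 : ℂ) ^ p * u w) z = _
  rw [pdy_sub (v := fun w => Complex.I / 2 * (w.2 : ℂ) ^ p * u w) dpdx (hcy.mul du), pdy_mul hcy du,
    pdy_mul (differentiableAt_const _) hp, pdy_const, pdy_cypow]
  ring

lemma comm_lemma (p q : ℕ) {u : Fn} (hu : ContDiff ℝ (⊤ : ℕ∞) u) (z : Pt) :
    Xop p (Yop q u) z - Yop q (Xop p u) z
      = Complex.I / 2 * ((q : ℂ) * (z.1 : ℂ) ^ (q - 1) + (p : ℂ) * (z.2 : ℂ) ^ (p - 1)) * u z := by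
  have e1 := pdx_Yop q hu z
  have e2 := pdy_Xop p hu z
  have e3 := pdx_pdy hu z
  show (pdx (Yop q u) z - Complex.I / 2 * (z.2 : ℂ) ^ p * Yop q u z)
      - (pdy (Xop p u) z + Complex.I / 2 * (z.1 : ℂ) ^ q * Xop p u z) = _
  rw [e1, e2, e3]
  simp only [Xop, Yop]
  ring

lemma Xop_lin (p : ℕ) {a b : Fn} {z : Pt} (ha : DifferentiableAt ℝ a z)
    (hb : DifferentiableAt ℝ b z) :
    Xop p (fun w => -a w - b w) z = -Xop p a z - Xop p b z := by
  show pdx (fun w => -a w - b w) z - Complex.I / 2 * (z.2 : ℂ) ^ p * (-a z - b z) = _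
  rw [pdx_sub (u := fun w => -a w) ha.neg hb, pdx_neg]
  simp only [Xop]
  ring

lemma Xop_lin' (p : ℕ) {a b : Fn} {z : Pt} (ha : DifferentiableAt ℝ a z)
    (hb : DifferentiableAt ℝ b z) :
    Xop p (fun w => a w - b w) z = Xop p a z - Xop p b z := by
  show pdx (fun w => a w - b w) z - Complex.I / 2 * (z.2 : ℂ) ^ p * (a z - b z) = _
  rw [pdx_sub ha hb]
  simp only [Xop]
  ring

lemma Yop_lin (q : ℕ) {a b : Fn} {z : Pt} (ha : DifferentiableAt ℝ a z)
    (hb : DifferentiableAt ℝ b z) :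
    Yop q (fun w => -a w - b w) z = -Yop q a z - Yop q b z := by
  show pdy (fun w => -a w - b w) z + Complex.I / 2 * (z.1 : ℂ) ^ q * (-a z - b z) = _
  rw [pdy_sub (u := fun w => -a w) ha.neg hb, pdy_neg]
  simp only [Yop]
  ring

lemma Yop_lin' (q : ℕ) {a b : Fn} {z : Pt} (ha : DifferentiableAt ℝ a z)
    (hb : DifferentiableAt ℝ b z) :
    Yop q (fun w => a w - b w) z = Yop q a z - Yop q b z := by
  show pdy (fun w => a w - b w) z + Complex.I / 2 * (z.1 : ℂ) ^ q * (a z - b z) = _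
  rw [pdy_sub ha hb]
  simp only [Yop]
  ring

/-- the twisted Laplacian on 1-forms,
𝕃_{p,q}(f1 dx + f2 dy) = (L_{p,q} f1 - M_{p,q} f2) dx + (L_{p,q} f2 + M_{p,q} f1) dy. -/
theorem stmt_2 (p q : ℕ) (hp : 1 ≤ p) (hq : 1 ≤ q) (f1 f2 : Fn)
    (hf1 : ContDiff ℝ (⊤ : ℕ∞) f1) (hf2 : ContDiff ℝ (⊤ : ℕ∞) f2) :
    (∀ z : Pt, (DA0 p q (DAs1 p q (f1, f2))).1 z + (DAs2 p q (DA1 p q (f1, f2))).1 z =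
        Lpq p q f1 z - Mpq p q f2 z) ∧
    (∀ z : Pt, (DA0 p q (DAs1 p q (f1, f2))).2 z + (DAs2 p q (DA1 p q (f1, f2))).2 z =
        Lpq p q f2 z + Mpq p q f1 z) := by
  refine ⟨fun z => ?_, fun z => ?_⟩
  · have dA1 := (contDiff_Xop p hf1).differentiable (by simp) z
    have dB2 := (contDiff_Yop q hf2).differentiable (by simp) z
    have dA2 := (contDiff_Xop p hf2).differentiable (by simp) z
    have dB1 := (contDiff_Yop q hf1).differentiable (by simp) z
    have comm := comm_lemma p q hf2 z
    show Xop p (fun w => -Xop p f1 w - Yop q f2 w) z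
        + Yop q (fun w => Xop p f2 w - Yop q f1 w) z = Lpq p q f1 z - Mpq p q f2 z
    rw [Xop_lin p dA1 dB2, Yop_lin' q dA2 dB1]
    simp only [Lpq, Mpq]
    linear_combination -comm
  · have dA1 := (contDiff_Xop p hf1).differentiable (by simp) z
    have dB2 := (contDiff_Yop q hf2).differentiable (by simp) z
    have dA2 := (contDiff_Xop p hf2).differentiable (by simp) z
    have dB1 := (contDiff_Yop q hf1).differentiable (by simp) z
    have comm := comm_lemma p q hf1 z
    show Yop q (fun w => -Xop p f1 w - Yop q f2 w) z
        + -Xop p (fun w => Xop p f2 w - Yop q f1 w) z = Lpq p q f2 z + Mpq p q f1 z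
    rw [Yop_lin q dA1 dB2, Xop_lin' p dA2 dB1]
    simp only [Lpq, Mpq]
    linear_combination comm

end
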